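/- arXiv:math/0608053 — 4 statements merged into one kernel-verified Lean document; each statement's English description precedes it below -/
import Mathlib

section
/- Let (X,Z,Y) be square-integrable random variables/vectors with Y real, Z ∈ ℝ^q, X ∈ ℝ^p. Among all functions of the form m₀(X,Z) = μ + Zᵀβ + g(X) with E[g(X)] = 0, the minimizer of E[(Y − m₀(X,Z))²] satisfies g(X) = E[Y − μ − Zᵀβ | X], μ = E[Y] − E[Z]ᵀβ, and β = (E[(Z − E[Z|X])(Z − E[Z|X])ᵀ])⁻¹ E[(Z − E[Z|X])(Y − E[Y|X])], provided the indicated matrix is invertible. -/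
open MeasureTheory Matrix

/-!
Let `A = Y - (μ₀ + Zᵀβ + g(X))` be the residual of the minimiser. The model class is a linear
space containing `Zᵀβ' + ψ` for every square-integrable `σ(X)`-measurable `ψ` (factor `ψ = φ ∘ X`
and move the mean of `φ` into the intercept), so minimality makes `A` orthogonal in `L²(P)` to all
of these. Orthogonality to the `σ(X)`-measurable functions says `E[A | X] = 0`, i.e.
`g(X) = E[Y - μ₀ - Zᵀβ | X]`, and orthogonality to constants gives `μ₀`. Finally
`(Y - E[Y|X]) - (Z - E[Z|X])ᵀβ` differs from `A` by a function of `X`, so it is orthogonal to each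
`Z_j - E[Z_j|X]`: these are the normal equations `Bβ = E[(Z - E[Z|X])(Y - E[Y|X])]`.
-/

theorem eq_zero_of_forall_two_mul_le_sq_mul {c d : ℝ} (h : ∀ t : ℝ, 2 * t * c ≤ t ^ 2 * d) :
    c = 0 := by
  have hdiscr : discrim d (-2 * c) 0 ≤ 0 :=
    discrim_le_zero fun t => by nlinarith [h t]
  rw [discrim] at hdiscr
  nlinarith [sq_nonneg c]

section L2

variable {Ω : Type*} {m m0 : MeasurableSpace Ω} {μ : Measure Ω}

theorem integral_mul_eq_zero_of_forall_integral_sq_le {A D : Ω → ℝ} (hA : MemLp A 2 μ)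
    (hD : MemLp D 2 μ) (h : ∀ t : ℝ, ∫ ω, A ω ^ 2 ∂μ ≤ ∫ ω, (A ω - t * D ω) ^ 2 ∂μ) :
    ∫ ω, A ω * D ω ∂μ = 0 := by
  have hAD : Integrable (fun ω => A ω * D ω) μ := hA.integrable_mul hD
  have hexpand : ∀ t : ℝ, ∫ ω, (A ω - t * D ω) ^ 2 ∂μ
      = ∫ ω, A ω ^ 2 ∂μ - 2 * t * ∫ ω, A ω * D ω ∂μ + t ^ 2 * ∫ ω, D ω ^ 2 ∂μ := by
    intro t
    have hexp : (fun ω => (A ω - t * D ω) ^ 2)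
        = fun ω => A ω ^ 2 - 2 * t * (A ω * D ω) + t ^ 2 * D ω ^ 2 := by
      funext ω; ring
    rw [hexp, integral_add, integral_sub, integral_const_mul, integral_const_mul]
    · exact hA.integrable_sq
    · exact hAD.const_mul _
    · exact hA.integrable_sq.sub (hAD.const_mul _)
    · exact hD.integrable_sq.const_mul _
  exact eq_zero_of_forall_two_mul_le_sq_mul (d := ∫ ω, D ω ^ 2 ∂μ) fun t => by
    linarith [h t, hexpand t]

theorem ae_eq_condExp_of_forall_integral_sub_mul_eq_zero (hm : m ≤ m0)
    [SigmaFinite (μ.trim hm)] {f h : Ω → ℝ} (hf : Integrable f μ) (hh : StronglyMeasurable[m] h)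
    (hh1 : Integrable h μ)
    (horth : ∀ ψ : Ω → ℝ, StronglyMeasurable[m] ψ → MemLp ψ 2 μ →
      ∫ ω, (f ω - h ω) * ψ ω ∂μ = 0) :
    h =ᵐ[μ] μ[f | m] := by
  refine ae_eq_condExp_of_forall_setIntegral_eq hm hf (fun s _ _ => hh1.integrableOn)
    (fun s hs hμs => ?_) hh.aestronglyMeasurable
  have hind := horth (s.indicator fun _ => 1) (stronglyMeasurable_const.indicator hs)
    (memLp_indicator_const 2 (hm s hs) 1 (Or.inr hμs.ne))
  simp_rw [← Set.indicator_mul_right s (fun ω => f ω - h ω), mul_one] at hind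
  rw [integral_indicator (hm s hs), integral_sub hf.integrableOn hh1.integrableOn] at hind
  linarith

theorem integral_sub_condExp_mul_eq_zero [IsFiniteMeasure μ] (hm : m ≤ m0) {f ψ : Ω → ℝ}
    (hf : MemLp f 2 μ) (hψ : StronglyMeasurable[m] ψ) (hψ2 : MemLp ψ 2 μ) :
    ∫ ω, (f ω - μ[f | m] ω) * ψ ω ∂μ = 0 := by
  have hfψ : Integrable (fun ω => f ω * ψ ω) μ := hf.integrable_mul hψ2
  have hcondψ : Integrable (fun ω => μ[f | m] ω * ψ ω) μ :=
    (hf.condExp one_le_two).integrable_mul hψ2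
  have hpull : μ[f * ψ | m] =ᵐ[μ] μ[f | m] * ψ :=
    condExp_mul_of_stronglyMeasurable_right hψ hfψ (hf.integrable one_le_two)
  have hcond : ∫ ω, f ω * ψ ω ∂μ = ∫ ω, μ[f | m] ω * ψ ω ∂μ := by
    rw [← integral_condExp hm]
    exact integral_congr_ae hpull
  simp_rw [sub_mul]
  rw [integral_sub hfψ hcondψ, hcond, sub_self]

theorem gram_mulVec_eq_of_forall_integral_mul_sub_eq_zero {ι : Type*} [Fintype ι]
    {U : ι → Ω → ℝ} {V : Ω → ℝ}
    (hU : ∀ s, MemLp (U s) 2 μ) (hV : MemLp V 2 μ) (β : ι → ℝ)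
    (h : ∀ j, ∫ ω, U j ω * (V ω - ∑ s, U s ω * β s) ∂μ = 0) :
    (Matrix.of fun s t => ∫ ω, U s ω * U t ω ∂μ) *ᵥ β = fun j => ∫ ω, U j ω * V ω ∂μ := by
  funext j
  have hterm : ∀ s, Integrable (fun ω => U j ω * U s ω * β s) μ := fun s =>
    ((hU j).integrable_mul (hU s)).mul_const _
  have hsum : Integrable (fun ω => U j ω * ∑ s, U s ω * β s) μ := by
    simp_rw [Finset.mul_sum, ← mul_assoc]
    exact integrable_finsetSum _ fun s _ => hterm s
  have hUV : Integrable (fun ω => U j ω * V ω) μ := (hU j).integrable_mul hV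
  have hj := h j
  simp_rw [mul_sub] at hj
  rw [integral_sub hUV hsum] at hj
  simp_rw [Finset.mul_sum, ← mul_assoc] at hj
  rw [integral_finsetSum _ fun s _ => hterm s] at hj
  simp only [mulVec, dotProduct, of_apply, ← integral_mul_const]
  linarith

theorem memLp_sum_mul {ι : Type*} [Fintype ι] {p : ENNReal} {Z : Ω → ι → ℝ}
    (hZ : ∀ s, MemLp (fun ω => Z ω s) p μ) (β : ι → ℝ) :
    MemLp (fun ω => ∑ s, Z ω s * β s) p μ :=
  memLp_finsetSum _ fun s _ => (hZ s).mul_const (β s)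

end L2

section PartiallyLinear

variable {Ω E ι : Type*} [MeasurableSpace Ω] [MeasurableSpace E] [Fintype ι]
  {P : Measure Ω} [IsProbabilityMeasure P] {X : Ω → E} {Z : Ω → ι → ℝ} {Y : Ω → ℝ}
  {μ₀ : ℝ} {β : ι → ℝ} {g : E → ℝ}

def IsLeastSquaresFit (P : Measure Ω) (X : Ω → E) (Z : Ω → ι → ℝ) (Y : Ω → ℝ) (μ₀ : ℝ)
    (β : ι → ℝ) (g : E → ℝ) : Prop :=
  ∀ (μ' : ℝ) (β' : ι → ℝ) (g' : E → ℝ), Measurable g' → MemLp (fun ω => g' (X ω)) 2 P →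
    ∫ ω, g' (X ω) ∂P = 0 →
    ∫ ω, (Y ω - (μ₀ + ∑ s, Z ω s * β s + g (X ω))) ^ 2 ∂P ≤
      ∫ ω, (Y ω - (μ' + ∑ s, Z ω s * β' s + g' (X ω))) ^ 2 ∂P

theorem IsLeastSquaresFit.integral_residual_mul_eq_zero
    (hfit : IsLeastSquaresFit P X Z Y μ₀ β g) (hY2 : MemLp Y 2 P)
    (hZ2 : ∀ s, MemLp (fun ω => Z ω s) 2 P) (hg : Measurable g)
    (hg2 : MemLp (fun ω => g (X ω)) 2 P) (hgmean : ∫ ω, g (X ω) ∂P = 0) (β' : ι → ℝ)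
    {ψ : Ω → ℝ} (hψ : StronglyMeasurable[MeasurableSpace.comap X inferInstance] ψ)
    (hψ2 : MemLp ψ 2 P) :
    ∫ ω, (Y ω - (μ₀ + ∑ s, Z ω s * β s + g (X ω))) * (∑ s, Z ω s * β' s + ψ ω) ∂P = 0 := by
  obtain ⟨φ, hφ, rfl⟩ := hψ.exists_eq_measurable_comp
  set c := ∫ ω, φ (X ω) ∂P
  refine integral_mul_eq_zero_of_forall_integral_sq_le
    (hY2.sub (((memLp_const μ₀).add (memLp_sum_mul hZ2 β)).add hg2))
    ((memLp_sum_mul hZ2 β').add hψ2) fun t => ?_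
  -- perturb the fit in the direction `(c, β', φ - c)`, which stays in the class
  have hφ1 : Integrable (fun ω => φ (X ω)) P := hψ2.integrable one_le_two
  have hφc : Integrable (fun ω => φ (X ω) - c) P := hφ1.sub (integrable_const c)
  have hmean : ∫ ω, (g (X ω) + t * (φ (X ω) - c)) ∂P = 0 := by
    rw [integral_add (hg2.integrable one_le_two) (hφc.const_mul t), integral_const_mul,
      integral_sub hφ1 (integrable_const c), hgmean]
    simp [c]
  have hle := hfit (μ₀ + t * c) (β + t • β') (fun x => g x + t * (φ x - c))
    (hg.add (measurable_const.mul (hφ.measurable.sub measurable_const)))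
    (hg2.add ((hψ2.sub (memLp_const c)).const_mul t)) hmean
  convert hle using 3 with ω
  simp only [Pi.add_apply, Pi.smul_apply, smul_eq_mul, Function.comp_apply, mul_add,
    Finset.sum_add_distrib, Finset.mul_sum]
  ring_nf

theorem IsLeastSquaresFit.ae_eq_condExp (hfit : IsLeastSquaresFit P X Z Y μ₀ β g)
    (hX : Measurable X) (hY2 : MemLp Y 2 P) (hZ2 : ∀ s, MemLp (fun ω => Z ω s) 2 P)
    (hg : Measurable g) (hg2 : MemLp (fun ω => g (X ω)) 2 P) (hgmean : ∫ ω, g (X ω) ∂P = 0) :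
    (fun ω => g (X ω)) =ᵐ[P]
      P[(fun ω => Y ω - μ₀ - ∑ s, Z ω s * β s) | MeasurableSpace.comap X inferInstance] := by
  have hW : Integrable (fun ω => Y ω - μ₀ - ∑ s, Z ω s * β s) P :=
    ((hY2.sub (memLp_const μ₀)).sub (memLp_sum_mul hZ2 β)).integrable one_le_two
  refine ae_eq_condExp_of_forall_integral_sub_mul_eq_zero hX.comap_le hW
    (hg.comp (comap_measurable X)).stronglyMeasurable
    (hg2.integrable one_le_two) fun ψ hψ hψ2 => ?_
  convert hfit.integral_residual_mul_eq_zero hY2 hZ2 hg hg2 hgmean 0 hψ hψ2 using 3 with ω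
  simp only [Pi.zero_apply, mul_zero, Finset.sum_const_zero, zero_add]
  ring

theorem IsLeastSquaresFit.intercept_eq (hfit : IsLeastSquaresFit P X Z Y μ₀ β g)
    (hY2 : MemLp Y 2 P) (hZ2 : ∀ s, MemLp (fun ω => Z ω s) 2 P)
    (hg : Measurable g) (hg2 : MemLp (fun ω => g (X ω)) 2 P) (hgmean : ∫ ω, g (X ω) ∂P = 0) :
    μ₀ = ∫ ω, Y ω ∂P - ∑ s, (∫ ω, Z ω s ∂P) * β s := by
  have hres := hfit.integral_residual_mul_eq_zero hY2 hZ2 hg hg2 hgmean 0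
    (stronglyMeasurable_const (b := (1 : ℝ))) (memLp_const 1)
  have hZβ : Integrable (fun ω => ∑ s, Z ω s * β s) P :=
    (memLp_sum_mul hZ2 β).integrable one_le_two
  have hg1 : Integrable (fun ω => g (X ω)) P := hg2.integrable one_le_two
  have hμZβ : Integrable (fun ω => μ₀ + ∑ s, Z ω s * β s) P := (integrable_const μ₀).add hZβ
  have hpred : Integrable (fun ω => μ₀ + ∑ s, Z ω s * β s + g (X ω)) P := hμZβ.add hg1
  simp only [Pi.zero_apply, mul_zero, Finset.sum_const_zero, zero_add, mul_one] at hres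
  rw [integral_sub (hY2.integrable one_le_two) hpred, integral_add hμZβ hg1,
    integral_add (integrable_const μ₀) hZβ,
    integral_finsetSum _ fun s _ => ((hZ2 s).integrable one_le_two).mul_const _, hgmean] at hres
  simp only [integral_const, probReal_univ, smul_eq_mul, one_mul, integral_mul_const] at hres
  linarith

theorem IsLeastSquaresFit.integral_centered_mul_eq_zero
    (hfit : IsLeastSquaresFit P X Z Y μ₀ β g)
    (hX : Measurable X) (hY2 : MemLp Y 2 P) (hZ2 : ∀ s, MemLp (fun ω => Z ω s) 2 P)
    (hg : Measurable g) (hg2 : MemLp (fun ω => g (X ω)) 2 P) (hgmean : ∫ ω, g (X ω) ∂P = 0)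
    (j : ι) :
    ∫ ω, (Z ω j - P[(fun ω => Z ω j) | MeasurableSpace.comap X inferInstance] ω) *
      ((Y ω - P[Y | MeasurableSpace.comap X inferInstance] ω) -
        ∑ s, (Z ω s - P[(fun ω => Z ω s) | MeasurableSpace.comap X inferInstance] ω) * β s)
      ∂P = 0 := by
  set EY := P[Y | MeasurableSpace.comap X inferInstance]
  set EZ := fun s => P[(fun ω => Z ω s) | MeasurableSpace.comap X inferInstance]
  set Zc := fun ω => Z ω j - EZ j ω
  set A := fun ω => Y ω - (μ₀ + ∑ s, Z ω s * β s + g (X ω))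
  set R := fun ω => μ₀ + g (X ω) - EY ω + ∑ s, EZ s ω * β s
  have hR : StronglyMeasurable[MeasurableSpace.comap X inferInstance] R :=
    (((measurable_const.add (hg.comp (comap_measurable X))).sub
      stronglyMeasurable_condExp.measurable).add (Finset.measurable_sum _ fun s _ =>
        stronglyMeasurable_condExp.measurable.mul_const (β s))).stronglyMeasurable
  have hR2 : MemLp R 2 P :=
    (((memLp_const μ₀).add hg2).sub (hY2.condExp one_le_two)).add
      (memLp_sum_mul (fun s => (hZ2 s).condExp one_le_two) β)
  have hZc2 : MemLp Zc 2 P := (hZ2 j).sub ((hZ2 j).condExp one_le_two)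
  have hA2 : MemLp A 2 P :=
    hY2.sub (((memLp_const μ₀).add (memLp_sum_mul hZ2 β)).add hg2)
  have hZcA : ∫ ω, Zc ω * A ω ∂P = 0 := by
    classical
    convert hfit.integral_residual_mul_eq_zero hY2 hZ2 hg hg2 hgmean (Pi.single j 1)
      stronglyMeasurable_condExp.neg ((hZ2 j).condExp one_le_two).neg using 3 with ω
    simp only [Pi.single_apply, mul_ite, mul_one, mul_zero, Finset.sum_ite_eq', Finset.mem_univ,
      if_true, Pi.neg_apply, Zc, A]
    ring
  have hZcR : ∫ ω, Zc ω * R ω ∂P = 0 :=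
    integral_sub_condExp_mul_eq_zero hX.comap_le (hZ2 j) hR hR2
  calc _ = ∫ ω, (Zc ω * A ω + Zc ω * R ω) ∂P := by
        congr 1 with ω
        simp only [Zc, A, R, EY, EZ, sub_mul, Finset.sum_sub_distrib]
        ring
    _ = 0 := by
      rw [integral_add, hZcA, hZcR, add_zero]
      · exact hZc2.integrable_mul hA2
      · exact hZc2.integrable_mul hR2

theorem IsLeastSquaresFit.gram_mulVec_eq (hfit : IsLeastSquaresFit P X Z Y μ₀ β g)
    (hX : Measurable X) (hY2 : MemLp Y 2 P) (hZ2 : ∀ s, MemLp (fun ω => Z ω s) 2 P)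
    (hg : Measurable g) (hg2 : MemLp (fun ω => g (X ω)) 2 P) (hgmean : ∫ ω, g (X ω) ∂P = 0) :
    (Matrix.of fun s t =>
      ∫ ω, (Z ω s - P[(fun ω => Z ω s) | MeasurableSpace.comap X inferInstance] ω) *
        (Z ω t - P[(fun ω => Z ω t) | MeasurableSpace.comap X inferInstance] ω) ∂P) *ᵥ β =
    fun s => ∫ ω, (Z ω s - P[(fun ω => Z ω s) | MeasurableSpace.comap X inferInstance] ω) *
      (Y ω - P[Y | MeasurableSpace.comap X inferInstance] ω) ∂P :=
  gram_mulVec_eq_of_forall_integral_mul_sub_eq_zero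
    (fun s : ι => (hZ2 s).sub ((hZ2 s).condExp one_le_two))
    (hY2.sub (hY2.condExp one_le_two)) β
    (hfit.integral_centered_mul_eq_zero hX hY2 hZ2 hg hg2 hgmean)

end PartiallyLinear

theorem stmt0_general
    {Ω : Type*} [MeasurableSpace Ω] (P : Measure Ω) [IsProbabilityMeasure P]
    {p q : ℕ}
    (X : Ω → (Fin p → ℝ)) (Z : Ω → (Fin q → ℝ)) (Y : Ω → ℝ)
    (hX : Measurable X)
    (hY2 : MemLp Y 2 P) (hZ2 : ∀ s, MemLp (fun ω => Z ω s) 2 P)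
    (μ₀ : ℝ) (β : Fin q → ℝ) (g : (Fin p → ℝ) → ℝ)
    (hg : Measurable g) (hg2 : MemLp (fun ω => g (X ω)) 2 P)
    (hgmean : ∫ ω, g (X ω) ∂P = 0)
    -- (μ₀, β, g) minimizes the least-squares criterion over the class
    (hmin : ∀ (μ' : ℝ) (β' : Fin q → ℝ) (g' : (Fin p → ℝ) → ℝ),
      Measurable g' → MemLp (fun ω => g' (X ω)) 2 P →
      (∫ ω, g' (X ω) ∂P = 0) →
      ∫ ω, (Y ω - (μ₀ + (∑ s, Z ω s * β s) + g (X ω)))^2 ∂P ≤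
        ∫ ω, (Y ω - (μ' + (∑ s, Z ω s * β' s) + g' (X ω)))^2 ∂P)
    (B : Matrix (Fin q) (Fin q) ℝ)
    (hB : ∀ s t, B s t =
      ∫ ω, (Z ω s - (P[(fun ω => Z ω s) | MeasurableSpace.comap X inferInstance]) ω)
        * (Z ω t - (P[(fun ω => Z ω t) | MeasurableSpace.comap X inferInstance]) ω) ∂P)
    (hBinv : IsUnit B) :
    ((fun ω => g (X ω)) =ᵐ[P]
        P[(fun ω => Y ω - μ₀ - ∑ s, Z ω s * β s) | MeasurableSpace.comap X inferInstance])
    ∧ μ₀ = (∫ ω, Y ω ∂P) - ∑ s, (∫ ω, Z ω s ∂P) * β s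
    ∧ β = B⁻¹ *ᵥ (fun s =>
        ∫ ω, (Z ω s - (P[(fun ω => Z ω s) | MeasurableSpace.comap X inferInstance]) ω)
          * (Y ω - (P[Y | MeasurableSpace.comap X inferInstance]) ω) ∂P) := by
  have hfit : IsLeastSquaresFit P X Z Y μ₀ β g := hmin
  refine ⟨hfit.ae_eq_condExp hX hY2 hZ2 hg hg2 hgmean,
    hfit.intercept_eq hY2 hZ2 hg hg2 hgmean, ?_⟩
  have hBgram : B = Matrix.of fun s t =>
      ∫ ω, (Z ω s - P[(fun ω => Z ω s) | MeasurableSpace.comap X inferInstance] ω) *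
        (Z ω t - P[(fun ω => Z ω t) | MeasurableSpace.comap X inferInstance] ω) ∂P :=
    Matrix.ext hB
  rw [← hfit.gram_mulVec_eq hX hY2 hZ2 hg hg2 hgmean, ← hBgram, mulVec_mulVec,
    nonsing_inv_mul B ((isUnit_iff_isUnit_det B).mp hBinv), one_mulVec]

/-- characterization of the minimizer of the semiparametric
least-squares criterion `E[(Y - μ - Zᵀβ - g(X))²]` over the class of
partially linear functions with `E[g(X)] = 0`. -/
theorem stmt0
    {Ω : Type*} [MeasurableSpace Ω] (P : Measure Ω) [IsProbabilityMeasure P]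
    {p q : ℕ}
    (X : Ω → (Fin p → ℝ)) (Z : Ω → (Fin q → ℝ)) (Y : Ω → ℝ)
    (hX : Measurable X) (hZ : Measurable Z) (hY : Measurable Y)
    (hY2 : MemLp Y 2 P) (hZ2 : ∀ s, MemLp (fun ω => Z ω s) 2 P)
    (μ₀ : ℝ) (β : Fin q → ℝ) (g : (Fin p → ℝ) → ℝ)
    (hg : Measurable g) (hg2 : MemLp (fun ω => g (X ω)) 2 P)
    (hgmean : ∫ ω, g (X ω) ∂P = 0)
    -- (μ₀, β, g) minimizes the least-squares criterion over the class
    (hmin : ∀ (μ' : ℝ) (β' : Fin q → ℝ) (g' : (Fin p → ℝ) → ℝ),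
      Measurable g' → MemLp (fun ω => g' (X ω)) 2 P →
      (∫ ω, g' (X ω) ∂P = 0) →
      ∫ ω, (Y ω - (μ₀ + (∑ s, Z ω s * β s) + g (X ω)))^2 ∂P ≤
        ∫ ω, (Y ω - (μ' + (∑ s, Z ω s * β' s) + g' (X ω)))^2 ∂P)
    (B : Matrix (Fin q) (Fin q) ℝ)
    (hB : ∀ s t, B s t =
      ∫ ω, (Z ω s - (P[(fun ω => Z ω s) | MeasurableSpace.comap X inferInstance]) ω)
        * (Z ω t - (P[(fun ω => Z ω t) | MeasurableSpace.comap X inferInstance]) ω) ∂P)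
    (hBinv : IsUnit B) :
    ((fun ω => g (X ω)) =ᵐ[P]
        P[(fun ω => Y ω - μ₀ - ∑ s, Z ω s * β s) | MeasurableSpace.comap X inferInstance])
    ∧ μ₀ = (∫ ω, Y ω ∂P) - ∑ s, (∫ ω, Z ω s ∂P) * β s
    ∧ β = B⁻¹ *ᵥ (fun s =>
        ∫ ω, (Z ω s - (P[(fun ω => Z ω s) | MeasurableSpace.comap X inferInstance]) ω)
          * (Y ω - (P[Y | MeasurableSpace.comap X inferInstance]) ω) ∂P) :=
  stmt0_general P X Z Y hX hY2 hZ2 μ₀ β g hg hg2 hgmean hmin B hB hBinv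
end

section
/- Under the assumptions below, the semiparametric representation m₀(X,Z) = μ + Zᵀβ + g(X) with E[g(X)] = 0 is identifiable: if μ₁ + Zᵀβ₁ + g₁(X) = μ₂ + Zᵀβ₂ + g₂(X) almost surely with E[g₁(X)] = E[g₂(X)] = 0 and the matrix E[(Z − E[Z|X])(Z − E[Z|X])ᵀ] is positive definite, then μ₁ = μ₂, β₁ = β₂, and g₁(X) = g₂(X) almost surely. -/
/-!
Put `δ = β₁ - β₂`. The hypothesis says that `δᵀZ` agrees almost surely with a function of `X`,
so it equals its own conditional expectation given `X`, i.e. `δᵀ(Z - E[Z|X]) = 0` a.s.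
Then `δᵀBδ = E[(δᵀ(Z - E[Z|X]))²] = 0`, and positive definiteness of `B` gives `δ = 0`.
Integrating what remains, `μ₁ + g₁(X) = μ₂ + g₂(X)`, the centring of `g₁, g₂` gives `μ₁ = μ₂`.
-/

open MeasureTheory Matrix

namespace MeasureTheory

variable {Ω ι : Type*} [Fintype ι] {m m₀ : MeasurableSpace Ω} {μ : Measure Ω}

lemma condExp_sum_mul_ae_eq {f : ι → Ω → ℝ} (hf : ∀ i, Integrable (f i) μ) (c : ι → ℝ) :
    μ[fun ω => ∑ i, c i * f i ω | m] =ᵐ[μ] fun ω => ∑ i, c i * μ[f i | m] ω := by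
  have hsum : (fun ω => ∑ i, c i * f i ω) = ∑ i, c i • f i := by
    funext ω; simp [Finset.sum_apply]
  rw [hsum]
  refine (condExp_finsetSum (fun i _ => (hf i).smul (c i)) m).trans ?_
  filter_upwards [ae_all_iff.mpr fun i => condExp_smul (c i) (f i) m] with ω hω
  simp [Finset.sum_apply, hω]

lemma sum_mul_sub_condExp_ae_eq_zero (hm : m ≤ m₀) [SigmaFinite (μ.trim hm)]
    {f : ι → Ω → ℝ} (hf : ∀ i, Integrable (f i) μ) (c : ι → ℝ)
    (hc : AEStronglyMeasurable[m] (fun ω => ∑ i, c i * f i ω) μ) :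
    (fun ω => ∑ i, c i * (f i ω - μ[f i | m] ω)) =ᵐ[μ] 0 := by
  have hci : Integrable (fun ω => ∑ i, c i * f i ω) μ :=
    integrable_finsetSum _ fun i _ => (hf i).const_mul (c i)
  filter_upwards [condExp_sum_mul_ae_eq (m := m) hf c,
    condExp_of_aestronglyMeasurable' hm hc hci] with ω hlin hself
  simp only [mul_sub, Finset.sum_sub_distrib, Pi.zero_apply]
  rw [← hlin, hself, sub_self]

lemma dotProduct_mulVec_integral_mul_eq_integral_sq {W : ι → Ω → ℝ}
    (hW : ∀ i, MemLp (W i) 2 μ) (v : ι → ℝ) :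
    v ⬝ᵥ (Matrix.of fun i j => ∫ ω, W i ω * W j ω ∂μ) *ᵥ v
      = ∫ ω, (∑ i, v i * W i ω) ^ 2 ∂μ := by
  have hint : ∀ i j, Integrable (fun ω => v i * v j * (W i ω * W j ω)) μ := fun i j =>
    ((hW i).integrable_mul (hW j)).const_mul _
  have hsq : (fun ω => (∑ i, v i * W i ω) ^ 2)
      = fun ω => ∑ i, ∑ j, v i * v j * (W i ω * W j ω) := by
    funext ω
    rw [sq, Finset.sum_mul_sum]
    exact Finset.sum_congr rfl fun i _ => Finset.sum_congr rfl fun j _ => by ring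
  rw [hsq, integral_finsetSum _ fun i _ => integrable_finsetSum _ fun j _ => hint i j]
  simp only [dotProduct, mulVec, of_apply, Finset.mul_sum]
  refine Finset.sum_congr rfl fun i _ => ?_
  rw [integral_finsetSum _ fun j _ => hint i j]
  refine Finset.sum_congr rfl fun j _ => ?_
  rw [integral_const_mul]
  ring

lemma eq_zero_of_posDef_of_sum_mul_ae_eq_zero {W : ι → Ω → ℝ} (hW : ∀ i, MemLp (W i) 2 μ)
    {B : Matrix ι ι ℝ} (hB : ∀ i j, B i j = ∫ ω, W i ω * W j ω ∂μ) (hBpd : B.PosDef)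
    {v : ι → ℝ} (hv : (fun ω => ∑ i, v i * W i ω) =ᵐ[μ] 0) : v = 0 := by
  by_contra hv0
  have hpos : 0 < v ⬝ᵥ B *ᵥ v := by simpa using hBpd.dotProduct_mulVec_pos hv0
  have hB' : B = Matrix.of fun i j => ∫ ω, W i ω * W j ω ∂μ := Matrix.ext hB
  have hzero : ∫ ω, (∑ i, v i * W i ω) ^ 2 ∂μ = 0 := by
    rw [integral_congr_ae (g := 0) (hv.mono fun ω hω => by simp [hω])]
    simp
  rw [hB', dotProduct_mulVec_integral_mul_eq_integral_sq hW, hzero] at hpos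
  exact hpos.false

lemma eq_of_ae_const_add_eq_const_add [IsProbabilityMeasure μ] {a b : ℝ} {u v : Ω → ℝ}
    (hu : Integrable u μ) (hv : Integrable v μ) (hu0 : ∫ ω, u ω ∂μ = 0)
    (hv0 : ∫ ω, v ω ∂μ = 0) (h : ∀ᵐ ω ∂μ, a + u ω = b + v ω) : a = b := by
  have := integral_congr_ae h
  rwa [integral_add (integrable_const a) hu, integral_add (integrable_const b) hv, hu0, hv0,
    integral_const, integral_const, probReal_univ, one_smul, one_smul, add_zero, add_zero] at this

end MeasureTheory

theorem stmt1_general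
    {Ω : Type*} [MeasurableSpace Ω] (P : Measure Ω) [IsProbabilityMeasure P]
    {p q : ℕ}
    (X : Ω → (Fin p → ℝ)) (Z : Ω → (Fin q → ℝ))
    (hX : Measurable X)
    (hZ2 : ∀ s, MemLp (fun ω => Z ω s) 2 P)
    (μ₁ μ₂ : ℝ) (β₁ β₂ : Fin q → ℝ) (g₁ g₂ : (Fin p → ℝ) → ℝ)
    (hg₁ : Measurable g₁) (hg₂ : Measurable g₂)
    (hg₁2 : MemLp (fun ω => g₁ (X ω)) 2 P) (hg₂2 : MemLp (fun ω => g₂ (X ω)) 2 P)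
    (hmean₁ : ∫ ω, g₁ (X ω) ∂P = 0) (hmean₂ : ∫ ω, g₂ (X ω) ∂P = 0)
    (B : Matrix (Fin q) (Fin q) ℝ)
    (hB : ∀ s t, B s t =
      ∫ ω, (Z ω s - (P[(fun ω => Z ω s) | MeasurableSpace.comap X inferInstance]) ω)
        * (Z ω t - (P[(fun ω => Z ω t) | MeasurableSpace.comap X inferInstance]) ω) ∂P)
    (hBpd : B.PosDef)
    (heq : ∀ᵐ ω ∂P,
      μ₁ + (∑ s, Z ω s * β₁ s) + g₁ (X ω) = μ₂ + (∑ s, Z ω s * β₂ s) + g₂ (X ω)) :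
    μ₁ = μ₂ ∧ β₁ = β₂ ∧ ((fun ω => g₁ (X ω)) =ᵐ[P] (fun ω => g₂ (X ω))) := by
  set m : MeasurableSpace Ω := MeasurableSpace.comap X inferInstance
  have hlin : (fun ω => ∑ s, (β₁ - β₂) s * Z ω s)
      =ᵐ[P] fun ω => μ₂ - μ₁ + (g₂ (X ω) - g₁ (X ω)) := by
    filter_upwards [heq] with ω hω
    simp only [Pi.sub_apply, sub_mul, Finset.sum_sub_distrib, mul_comm (β₁ _), mul_comm (β₂ _)]
    linarith
  have hlin_meas : AEStronglyMeasurable[m] (fun ω => ∑ s, (β₁ - β₂) s * Z ω s) P :=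
    ⟨_, ((measurable_const.add (hg₂.sub hg₁)).comp (comap_measurable X)).stronglyMeasurable, hlin⟩
  have hresid := sum_mul_sub_condExp_ae_eq_zero hX.comap_le
    (fun s => (hZ2 s).integrable one_le_two) _ hlin_meas
  have hβ : β₁ = β₂ := sub_eq_zero.mp <| eq_zero_of_posDef_of_sum_mul_ae_eq_zero
    (fun s => (hZ2 s).sub ((hZ2 s).condExp one_le_two)) hB hBpd hresid
  have hg : ∀ᵐ ω ∂P, μ₁ + g₁ (X ω) = μ₂ + g₂ (X ω) := by
    filter_upwards [heq] with ω hω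
    rw [hβ] at hω
    linarith
  have hμ : μ₁ = μ₂ := eq_of_ae_const_add_eq_const_add (hg₁2.integrable one_le_two)
    (hg₂2.integrable one_le_two) hmean₁ hmean₂ hg
  exact ⟨hμ, hβ, hg.mono fun ω hω => by linarith⟩

/-- identifiability of the semiparametric representation
`m₀(X,Z) = μ + Zᵀβ + g(X)` with `E[g(X)] = 0`, provided the conditional
covariance matrix `E[(Z - E[Z|X])(Z - E[Z|X])ᵀ]` is positive definite. -/
theorem stmt1
    {Ω : Type*} [MeasurableSpace Ω] (P : Measure Ω) [IsProbabilityMeasure P]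
    {p q : ℕ}
    (X : Ω → (Fin p → ℝ)) (Z : Ω → (Fin q → ℝ))
    (hX : Measurable X) (hZ : Measurable Z)
    (hZ2 : ∀ s, MemLp (fun ω => Z ω s) 2 P)
    (μ₁ μ₂ : ℝ) (β₁ β₂ : Fin q → ℝ) (g₁ g₂ : (Fin p → ℝ) → ℝ)
    (hg₁ : Measurable g₁) (hg₂ : Measurable g₂)
    (hg₁2 : MemLp (fun ω => g₁ (X ω)) 2 P) (hg₂2 : MemLp (fun ω => g₂ (X ω)) 2 P)
    (hmean₁ : ∫ ω, g₁ (X ω) ∂P = 0) (hmean₂ : ∫ ω, g₂ (X ω) ∂P = 0)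
    (B : Matrix (Fin q) (Fin q) ℝ)
    (hB : ∀ s t, B s t =
      ∫ ω, (Z ω s - (P[(fun ω => Z ω s) | MeasurableSpace.comap X inferInstance]) ω)
        * (Z ω t - (P[(fun ω => Z ω t) | MeasurableSpace.comap X inferInstance]) ω) ∂P)
    (hBpd : B.PosDef)
    (heq : ∀ᵐ ω ∂P,
      μ₁ + (∑ s, Z ω s * β₁ s) + g₁ (X ω) = μ₂ + (∑ s, Z ω s * β₂ s) + g₂ (X ω)) :
    μ₁ = μ₂ ∧ β₁ = β₂ ∧ ((fun ω => g₁ (X ω)) =ᵐ[P] (fun ω => g₂ (X ω))) :=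
  stmt1_general P X Z hX hZ2 μ₁ μ₂ β₁ β₂ g₁ g₂ hg₁ hg₂ hg₁2 hg₂2 hmean₁ hmean₂ B hB hBpd heq
end

section
/- Let K : ℝ → ℝ be an I-th order kernel, i.e., ∫K(x)dx = 1, ∫x^i K(x)dx = 0 for i = 1,…,I−1, and ∫x^I K(x)dx ≠ 0, with K bounded and compactly supported. If g : ℝ → ℝ is I times continuously differentiable with bounded I-th derivative, then for b > 0, ∫ g(x₀ + bu) K(u) du = g(x₀) + (b^I / I!) g^{(I)}(x₀) ∫ u^I K(u) du + o(b^I) as b → 0. -/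
open MeasureTheory

open Set

lemma itdw_eq {g : ℝ → ℝ} {n : WithTop ℕ∞} (h : ContDiff ℝ n g) {m : ℕ} (hm : (m : WithTop ℕ∞) ≤ n)
    {s : Set ℝ} (hs : UniqueDiffOn ℝ s) {x : ℝ} (hx : x ∈ s) :
    iteratedDerivWithin m g s x = iteratedDeriv m g x := by
  have H : HasFTaylorSeriesUpToOn n g (ftaylorSeriesWithin ℝ g univ) s :=
    ((contDiffOn_univ.2 h).ftaylorSeriesWithin uniqueDiffOn_univ).mono (subset_univ s)
  have h2 := H.eq_iteratedFDerivWithin_of_uniqueDiffOn hm hs hx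
  rw [iteratedDerivWithin_eq_iteratedFDerivWithin, iteratedDeriv_eq_iteratedFDeriv, ← h2]
  simp [ftaylorSeriesWithin, iteratedFDerivWithin_univ]

lemma taux {I : ℕ} (hI : 1 ≤ I) {f : ℝ → ℝ} (hf : ContDiff ℝ (I : ℕ∞) f)
    {c d : ℝ} (hc : ∀ s t : ℝ, |s - t| ≤ d → |iteratedDeriv I f s - iteratedDeriv I f t| ≤ c)
    {x₀ y : ℝ} (hxy : x₀ < y) (hd : y - x₀ ≤ d) :
    |f y - ∑ i ∈ Finset.range (I + 1), iteratedDeriv i f x₀ * (y - x₀) ^ i / (Nat.factorial i)|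
      ≤ c * (y - x₀) ^ I / (Nat.factorial I) := by
  obtain ⟨n, rfl⟩ : ∃ n, I = n + 1 := ⟨I - 1, (Nat.succ_pred_eq_of_pos hI).symm⟩
  have hu : UniqueDiffOn ℝ (Icc x₀ y) := uniqueDiffOn_Icc hxy
  have hfC : ContDiff ℝ ((n + 1 : ℕ) : WithTop ℕ∞) f := by exact_mod_cast hf
  have hcd : ContDiffOn ℝ (n : ℕ) f (Icc x₀ y) :=
    (hfC.of_le (by exact_mod_cast Nat.cast_le.2 (Nat.le_succ n))).contDiffOn
  have hdiff : DifferentiableOn ℝ (iteratedDerivWithin n f (Icc x₀ y)) (Ioo x₀ y) := by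
    have h1 : Differentiable ℝ (iteratedDeriv n f) :=
      (contDiff_nat_iff_iteratedDeriv.1 (by exact_mod_cast hfC)).2 n (Nat.lt_succ_self n)
    refine (h1.differentiableOn).congr fun z hz => ?_
    exact itdw_eq hfC (by exact_mod_cast Nat.cast_le.2 (Nat.le_succ n)) hu (Ioo_subset_Icc_self hz)
  obtain ⟨x', hx', hT⟩ := taylor_mean_remainder_lagrange hxy.ne (by rwa [uIcc_of_le hxy.le])
    (by rwa [uIcc_of_le hxy.le, uIoo_of_le hxy.le])
  rw [uIcc_of_le hxy.le] at hT
  rw [uIoo_of_le hxy.le] at hx'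
  have hx0Icc : x₀ ∈ Icc x₀ y := left_mem_Icc.2 hxy.le
  have hTe : taylorWithinEval f n (Icc x₀ y) x₀ y
      = ∑ i ∈ Finset.range (n + 1), iteratedDeriv i f x₀ * (y - x₀) ^ i / (Nat.factorial i) := by
    rw [taylor_within_apply]
    refine Finset.sum_congr rfl fun i hi => ?_
    have hile : (i : WithTop ℕ∞) ≤ ((n + 1 : ℕ) : WithTop ℕ∞) := by
      exact_mod_cast Nat.le_succ_of_le (Nat.lt_succ_iff.1 (Finset.mem_range.1 hi))
    rw [itdw_eq hfC hile hu hx0Icc]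
    rw [smul_eq_mul]
    ring
  rw [itdw_eq hfC le_rfl hu (Ioo_subset_Icc_self hx')] at hT
  have key : f y - ∑ i ∈ Finset.range (n + 1 + 1),
        iteratedDeriv i f x₀ * (y - x₀) ^ i / (Nat.factorial i)
      = (iteratedDeriv (n+1) f x' - iteratedDeriv (n+1) f x₀) * (y - x₀) ^ (n+1)
          / (Nat.factorial (n+1)) := by
    rw [Finset.sum_range_succ, ← hTe, sub_add_eq_sub_sub, hT]
    ring
  rw [key, abs_div, abs_mul, abs_of_nonneg (pow_nonneg (by linarith : (0:ℝ) ≤ y - x₀) _),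
    abs_of_nonneg (by positivity : (0:ℝ) ≤ (Nat.factorial (n+1) : ℝ))]
  have hb : |iteratedDeriv (n+1) f x' - iteratedDeriv (n+1) f x₀| ≤ c := by
    refine hc _ _ ?_
    rw [abs_of_pos (by linarith [hx'.1] : (0:ℝ) < x' - x₀)]
    linarith [hx'.2]
  gcongr

lemma ttwo {I : ℕ} (hI : 1 ≤ I) {g : ℝ → ℝ} (hg : ContDiff ℝ (I : ℕ∞) g)
    {c d : ℝ} (hc0 : 0 ≤ c)
    (hc : ∀ s t : ℝ, |s - t| ≤ d → |iteratedDeriv I g s - iteratedDeriv I g t| ≤ c)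
    {x₀ y : ℝ} (hd : |y - x₀| ≤ d) :
    |g y - ∑ i ∈ Finset.range (I + 1), iteratedDeriv i g x₀ * (y - x₀) ^ i / (Nat.factorial i)|
      ≤ c * |y - x₀| ^ I / (Nat.factorial I) := by
  rcases lt_trichotomy x₀ y with hxy | hxy | hxy
  · rw [abs_of_pos (by linarith : (0:ℝ) < y - x₀)]
    exact taux hI hg hc hxy (by rw [abs_of_pos (by linarith : (0:ℝ) < y - x₀)] at hd; exact hd)
  · subst hxy
    have : ∑ i ∈ Finset.range (I + 1),
        iteratedDeriv i g x₀ * (x₀ - x₀) ^ i / (Nat.factorial i) = g x₀ := by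
      rw [Finset.sum_eq_single 0]
      · simp
      · intro i _ hi
        simp [sub_self, zero_pow hi]
      · simp
    rw [this]
    simp
    positivity
  · -- y < x₀ : reflection
    set F : ℝ → ℝ := fun z => g ((x₀ + y) + z) with hF
    set f : ℝ → ℝ := fun t => F (-t) with hf
    have hfc : ContDiff ℝ (I : ℕ∞) f := by
      have : f = g ∘ (fun t => (x₀ + y) + (-t)) := rfl
      rw [this]
      exact hg.comp ((contDiff_const.add contDiff_neg))
    have hid : ∀ (m : ℕ) (x : ℝ), iteratedDeriv m f x
        = (-1 : ℝ) ^ m * iteratedDeriv m g (x₀ + y - x) := by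
      intro m x
      have h1 := iteratedDeriv_comp_neg m F x
      have h2 := iteratedDeriv_comp_const_add m g (x₀ + y)
      rw [hf, h1, smul_eq_mul, hF]
      rw [show iteratedDeriv m (fun z => g (x₀ + y + z)) (-x)
          = iteratedDeriv m g (x₀ + y + (-x)) from congrFun h2 (-x)]
      ring_nf
    have hc' : ∀ s t : ℝ, |s - t| ≤ d →
        |iteratedDeriv I f s - iteratedDeriv I f t| ≤ c := by
      intro s t hst
      rw [hid, hid, ← mul_sub, abs_mul, abs_pow, abs_neg, abs_one, one_pow, one_mul]
      refine hc _ _ ?_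
      rw [show (x₀ + y - s) - (x₀ + y - t) = t - s by ring, abs_sub_comm]
      exact hst
    have hd' : x₀ - y ≤ d := by
      rw [abs_of_neg (by linarith : y - x₀ < 0)] at hd; linarith
    have := taux hI hfc hc' hxy hd'
    have hfx : f x₀ = g y := by simp [hf, hF]
    have hsum : ∑ i ∈ Finset.range (I + 1),
        iteratedDeriv i f y * (x₀ - y) ^ i / (Nat.factorial i)
        = ∑ i ∈ Finset.range (I + 1),
        iteratedDeriv i g x₀ * (y - x₀) ^ i / (Nat.factorial i) := by
      refine Finset.sum_congr rfl fun i _ => ?_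
      rw [hid, show x₀ + y - y = x₀ by ring,
        show (x₀ - y) ^ i = (-1 : ℝ) ^ i * (y - x₀) ^ i by rw [← neg_pow, neg_sub],
        show (-1 : ℝ) ^ i * iteratedDeriv i g x₀ * ((-1 : ℝ) ^ i * (y - x₀) ^ i)
          = ((-1 : ℝ) ^ i * (-1 : ℝ) ^ i) * (iteratedDeriv i g x₀ * (y - x₀) ^ i) by ring,
        ← pow_add, Even.neg_one_pow ⟨i, rfl⟩, one_mul]
    rw [hfx, hsum] at this
    rw [abs_of_neg (by linarith : y - x₀ < 0), neg_sub]
    exact this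

/-- Taylor expansion of a kernel-smoothed function with an
`I`-th order kernel: `∫ g(x₀ + bu)K(u)du = g(x₀) + (bᴵ/I!) g⁽ᴵ⁾(x₀) ∫uᴵK(u)du
+ o(bᴵ)` as `b → 0⁺`, uniformly over `x₀` in any compact set. -/
theorem stmt6
    (I : ℕ) (hI : 2 ≤ I)
    (K : ℝ → ℝ) (hKmeas : Measurable K)
    (BK : ℝ) (hKbd : ∀ x, |K x| ≤ BK) (hKsupp : HasCompactSupport K)
    (hK1 : ∫ x, K x = 1)
    (hKmom : ∀ i : ℕ, 1 ≤ i → i ≤ I - 1 → ∫ x, x ^ i * K x = 0)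
    (hKI : ∫ x, x ^ I * K x ≠ 0)
    (g : ℝ → ℝ) (hg : ContDiff ℝ I g)
    (Bg : ℝ) (hgbd : ∀ x, |iteratedDeriv I g x| ≤ Bg)
    (hgu : UniformContinuous (iteratedDeriv I g)) :
    ∀ S : Set ℝ, IsCompact S → ∀ ε > 0, ∃ δ > 0, ∀ b : ℝ, 0 < b → b < δ →
      ∀ x₀ ∈ S,
        |(∫ u, g (x₀ + b * u) * K u) - g x₀
            - b ^ I / (Nat.factorial I) * iteratedDeriv I g x₀ * ∫ u, u ^ I * K u|
          ≤ ε * b ^ I := by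
  intro S _hS ε hε
  obtain ⟨R0, hR0⟩ := hKsupp.isCompact.isBounded.subset_closedBall 0
  set R : ℝ := max R0 1 with hRdef
  have hR1 : (1:ℝ) ≤ R := le_max_right _ _
  have hRpos : (0:ℝ) < R := by linarith
  have hsupp : tsupport K ⊆ Icc (-R) R := by
    intro x hx
    have h1 : x ∈ Metric.closedBall (0:ℝ) R0 := hR0 hx
    rw [Metric.mem_closedBall, Real.dist_eq, sub_zero] at h1
    have : |x| ≤ R := h1.trans (le_max_left _ _)
    exact abs_le.1 this
  have hBK : 0 ≤ BK := le_trans (abs_nonneg _) (hKbd 0)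
  have hIfac : (0:ℝ) < (Nat.factorial I : ℝ) := by positivity
  set D : ℝ := R ^ I * BK * (2 * R) / (Nat.factorial I) + 1 with hDdef
  have hD1 : R ^ I * BK * (2 * R) / (Nat.factorial I) ≥ 0 := by positivity
  have hDpos : 0 < D := by rw [hDdef]; linarith
  set c : ℝ := ε / D with hcdef
  have hcpos : 0 < c := by positivity
  obtain ⟨d', hd'pos, hd'⟩ := Metric.uniformContinuous_iff.1 hgu c hcpos
  set d : ℝ := d' / 2 with hddef
  have hdpos : 0 < d := by positivity
  refine ⟨d / R, by positivity, fun b hb hbδ x₀ _ => ?_⟩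
  have hbR : b * R < d := (lt_div_iff₀ hRpos).1 hbδ
  have hcb : ∀ s t : ℝ, |s - t| ≤ d → |iteratedDeriv I g s - iteratedDeriv I g t| ≤ c := by
    intro s t hst
    have h2 := hd' (show dist s t < d' by rw [Real.dist_eq]; linarith)
    rw [Real.dist_eq] at h2
    linarith
  -- integrability
  have hKmeasA : MeasurableSet (tsupport K) := (isClosed_tsupport K).measurableSet
  have hKfin : volume (tsupport K) < ⊤ := hKsupp.isCompact.measure_lt_top
  have hint : ∀ f : ℝ → ℝ, Continuous f → Integrable (fun u => f u * K u) := by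
    intro f hf
    obtain ⟨C, hC⟩ := hKsupp.isCompact.exists_bound_of_continuousOn hf.continuousOn
    refine Integrable.mono'
      (g := fun u => (tsupport K).indicator (fun _ => C * BK) u) ?_ ?_ ?_
    · exact (integrable_indicator_iff hKmeasA).2 (integrableOn_const hKfin.ne)
    · exact hf.aestronglyMeasurable.mul hKmeas.aestronglyMeasurable
    · refine Filter.Eventually.of_forall fun u => ?_
      by_cases hu : u ∈ tsupport K
      · simp only [Set.indicator_of_mem hu, Real.norm_eq_abs, abs_mul]
        have hCu : |f u| ≤ C := by simpa [Real.norm_eq_abs] using hC u hu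
        exact mul_le_mul hCu (hKbd u) (abs_nonneg _) ((abs_nonneg _).trans hCu)
      · simp only [Set.indicator_of_notMem hu, image_eq_zero_of_notMem_tsupport hu, mul_zero]
        simp
  have hpolyc : ∀ i : ℕ, Continuous fun u : ℝ =>
      iteratedDeriv i g x₀ * (b * u) ^ i / (Nat.factorial i) :=
    fun i => ((continuous_const.mul ((continuous_const.mul continuous_id).pow i)).div_const _)
  have hgc : Continuous fun u : ℝ => g (x₀ + b * u) :=
    hg.continuous.comp (continuous_const.add (continuous_const.mul continuous_id))
  -- the expansion
  set P : ℝ → ℝ := fun u => ∑ i ∈ Finset.range (I + 1),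
      iteratedDeriv i g x₀ * (b * u) ^ i / (Nat.factorial i) with hPdef
  have hPc : Continuous P := by
    exact continuous_finset_sum _ fun i _ => hpolyc i
  have hsplit : ∀ i : ℕ, (∫ u, (iteratedDeriv i g x₀ * (b * u) ^ i / (Nat.factorial i)) * K u)
      = iteratedDeriv i g x₀ * b ^ i / (Nat.factorial i) * ∫ u, u ^ i * K u := by
    intro i
    rw [← integral_const_mul]
    congr 1
    ext u
    rw [mul_pow]
    ring
  have hPint : (∫ u, P u * K u)
      = ∑ i ∈ Finset.range (I + 1),
        iteratedDeriv i g x₀ * b ^ i / (Nat.factorial i) * ∫ u, u ^ i * K u := by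
    rw [hPdef]
    simp_rw [Finset.sum_mul]
    rw [integral_finset_sum _ fun i _ => hint _ (hpolyc i)]
    exact Finset.sum_congr rfl fun i _ => hsplit i
  have hsum : ∑ i ∈ Finset.range (I + 1),
      iteratedDeriv i g x₀ * b ^ i / (Nat.factorial i) * ∫ u, u ^ i * K u
      = g x₀ + b ^ I / (Nat.factorial I) * iteratedDeriv I g x₀ * ∫ u, u ^ I * K u := by
    rw [Finset.sum_range_succ, Finset.sum_eq_single 0]
    · rw [show (∫ u : ℝ, u ^ (0:ℕ) * K u) = 1 by simpa using hK1]
      simp only [iteratedDeriv_zero, pow_zero, Nat.factorial_zero, Nat.cast_one, div_one, mul_one]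
      ring
    · intro i hi hi0
      rw [hKmom i (Nat.one_le_iff_ne_zero.2 hi0) (Nat.le_sub_one_of_lt (Finset.mem_range.1 hi)),
        mul_zero]
    · intro h0
      exact absurd (Finset.mem_range.2 (by omega)) h0
  have hEq : (∫ u, g (x₀ + b * u) * K u) - g x₀
      - b ^ I / (Nat.factorial I) * iteratedDeriv I g x₀ * ∫ u, u ^ I * K u
      = ∫ u, (g (x₀ + b * u) - P u) * K u := by
    simp_rw [sub_mul]
    rw [integral_sub (hint _ hgc) (hint _ hPc), hPint, hsum]
    ring
  rw [hEq]
  -- bound the remainder integral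
  have hIccMeas : MeasurableSet (Icc (-R) R) := measurableSet_Icc
  have hbound : ∀ u : ℝ, ‖(g (x₀ + b * u) - P u) * K u‖
      ≤ (Icc (-R) R).indicator (fun _ => c * (b * R) ^ I / (Nat.factorial I) * BK) u := by
    intro u
    by_cases hu : u ∈ Icc (-R) R
    · simp only [Set.indicator_of_mem hu, Real.norm_eq_abs, abs_mul]
      have huR : |u| ≤ R := abs_le.2 ⟨hu.1, hu.2⟩
      have hbu : |b * u| ≤ b * R := by
        rw [abs_mul, abs_of_pos hb]
        exact mul_le_mul_of_nonneg_left huR hb.le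
      have hTay : |g (x₀ + b * u) - P u| ≤ c * |b * u| ^ I / (Nat.factorial I) := by
        have := ttwo (by omega : 1 ≤ I) hg hcpos.le hcb
          (x₀ := x₀) (y := x₀ + b * u) (by rw [add_sub_cancel_left]; exact hbu.trans hbR.le)
        simpa [add_sub_cancel_left] using this
      have hmono : c * |b * u| ^ I / (Nat.factorial I) ≤ c * (b * R) ^ I / (Nat.factorial I) := by
        gcongr
      exact mul_le_mul (hTay.trans hmono) (hKbd u) (abs_nonneg _) (by positivity)
    · have hKu : K u = 0 := image_eq_zero_of_notMem_tsupport (fun h => hu (hsupp h))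
      simp only [Set.indicator_of_notMem hu, hKu, mul_zero]
      simp
  have hboundInt : Integrable
      ((Icc (-R) R).indicator (fun _ => c * (b * R) ^ I / (Nat.factorial I) * BK)) :=
    (integrable_indicator_iff hIccMeas).2 (integrableOn_const (by
      rw [Real.volume_Icc]; exact ENNReal.ofReal_ne_top))
  have hmain : ‖∫ u, (g (x₀ + b * u) - P u) * K u‖
      ≤ ∫ u, (Icc (-R) R).indicator (fun _ => c * (b * R) ^ I / (Nat.factorial I) * BK) u :=
    norm_integral_le_of_norm_le hboundInt (Filter.Eventually.of_forall hbound)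
  rw [Real.norm_eq_abs] at hmain
  refine hmain.trans ?_
  rw [integral_indicator_const _ hIccMeas, Real.volume_real_Icc, smul_eq_mul,
    max_eq_left (by linarith : (0:ℝ) ≤ R - (-R))]
  have harith : (R - (-R)) * (c * (b * R) ^ I / (Nat.factorial I) * BK) = c * (D - 1) * b ^ I := by
    rw [hDdef, mul_pow]
    field_simp
    ring
  rw [harith]
  have hcD : c * D = ε := by
    rw [hcdef]
    field_simp
  have : c * (D - 1) ≤ ε := by nlinarith
  have hbI : (0:ℝ) ≤ b ^ I := by positivity
  nlinarith
end

section
/- Covariance inequality for bounded mixing variables: if ξ is 𝒜-measurable with |ξ| ≤ C₁ a.s. and η is ℬ-measurable with |η| ≤ C₂ a.s., then |E[ξη] − E[ξ]E[η]| ≤ 4 C₁ C₂ α(𝒜,ℬ), where α is the strong mixing coefficient. -/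
open MeasureTheory

/-- The strong mixing (α-mixing) coefficient between two sub-σ-fields. -/
noncomputable def alphaMix {Ω : Type*} [MeasurableSpace Ω] (P : Measure Ω)
    (A B : MeasurableSpace Ω) : ℝ :=
  sSup {x : ℝ | ∃ a b : Set Ω, MeasurableSet[A] a ∧ MeasurableSet[B] b ∧
    x = |(P (a ∩ b)).toReal - (P a).toReal * (P b).toReal|}

section Helpers

variable {Ω : Type*} [m0 : MeasurableSpace Ω] (P : Measure Ω) [IsProbabilityMeasure P]

/-- Key reduction: replace a bounded `m`-measurable factor by a ±1-valued one. -/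
lemma reduce {m : MeasurableSpace Ω} (hm : m ≤ m0) (η : Ω → ℝ) (hη : Integrable η P) :
    ∃ a : Set Ω, MeasurableSet[m] a ∧
      ∀ (ξ : Ω → ℝ) (C : ℝ), Measurable[m] ξ → (∀ᵐ ω ∂P, |ξ ω| ≤ C) →
        |(∫ ω, ξ ω * η ω ∂P) - (∫ ω, ξ ω ∂P) * (∫ ω, η ω ∂P)|
          ≤ C * |(∫ ω, (2 * a.indicator (fun _ => (1:ℝ)) ω - 1) * η ω ∂P)
              - (∫ ω, (2 * a.indicator (fun _ => (1:ℝ)) ω - 1) ∂P) * (∫ ω, η ω ∂P)| := by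
  classical
  set g : Ω → ℝ := P[η | m] with hgdef
  set c : ℝ := ∫ ω, η ω ∂P with hc
  set a : Set Ω := {ω | c ≤ g ω} with hadef
  have ha : MeasurableSet[m] a :=
    stronglyMeasurable_condExp.measurable measurableSet_Ici
  refine ⟨a, ha, ?_⟩
  set s : Ω → ℝ := fun ω => 2 * a.indicator (fun _ => (1:ℝ)) ω - 1 with hs
  have hs_val : ∀ ω, s ω = if c ≤ g ω then 1 else -1 := by
    intro ω
    by_cases h : c ≤ g ω <;>
      simp [hs, Set.indicator_apply, hadef, Set.mem_setOf_eq, h]; norm_num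
  have hsm : Measurable[m] s := by
    refine (measurable_const.mul ?_).sub measurable_const
    exact (measurable_const.indicator ha)
  have hs_bd : ∀ ω, |s ω| ≤ 1 := by
    intro ω; rw [hs_val]; split_ifs <;> simp
  -- pull-out: ∫ f*η = ∫ f*g for m-measurable bounded f
  have pull : ∀ (f : Ω → ℝ) (D : ℝ), Measurable[m] f → (∀ᵐ ω ∂P, |f ω| ≤ D) →
      (∫ ω, f ω * η ω ∂P) = ∫ ω, f ω * g ω ∂P := by
    intro f D hf hfb
    have hfb' : ∀ᵐ ω ∂P, ‖f ω‖ ≤ D := by simpa [Real.norm_eq_abs] using hfb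
    have h1 : P[(f * η) | m] =ᵐ[P] f * P[η | m] :=
      condExp_stronglyMeasurable_mul_of_bound hm hf.stronglyMeasurable hη D hfb'
    have hint : Integrable (f * η) P :=
      hη.bdd_mul ((hf.mono hm le_rfl).aestronglyMeasurable) hfb'
    calc (∫ ω, f ω * η ω ∂P) = ∫ ω, (P[(f * η) | m]) ω ∂P :=
          (integral_condExp hm).symm
      _ = ∫ ω, f ω * g ω ∂P := integral_congr_ae h1
  intro ξ C hξm hξb
  have hC : 0 ≤ C := by
    rcases hξb.exists with ⟨ω, hω⟩
    exact (abs_nonneg _).trans hω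
  have hg_int : Integrable g P := integrable_condExp
  have hgc_int : Integrable (fun ω => g ω - c) P := hg_int.sub (integrable_const c)
  have hξ_meas : AEStronglyMeasurable[m0] ξ P := (hξm.mono hm le_rfl).aestronglyMeasurable
  have hξb' : ∀ᵐ ω ∂P, ‖ξ ω‖ ≤ C := by simpa [Real.norm_eq_abs] using hξb
  have hξ_int : Integrable ξ P := (integrable_const C).mono' hξ_meas hξb'
  have hs_meas : AEStronglyMeasurable[m0] s P := (hsm.mono hm le_rfl).aestronglyMeasurable
  have hsb' : ∀ᵐ ω ∂P, ‖s ω‖ ≤ 1 :=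
    Filter.Eventually.of_forall (by simpa [Real.norm_eq_abs] using hs_bd)
  have hs_int : Integrable s P := (integrable_const (1:ℝ)).mono' hs_meas hsb'
  have hξgc_int : Integrable (fun ω => ξ ω * (g ω - c)) P :=
    hgc_int.bdd_mul hξ_meas hξb'
  have hsgc_int : Integrable (fun ω => s ω * (g ω - c)) P :=
    hgc_int.bdd_mul hs_meas hsb'
  -- Cov as single integral
  have cov_eq : ∀ (f : Ω → ℝ), Integrable f P →
      Integrable (fun ω => f ω * (g ω - c)) P →
      (∫ ω, f ω * g ω ∂P) - (∫ ω, f ω ∂P) * c = ∫ ω, f ω * (g ω - c) ∂P := by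
    intro f hf hfgc
    have : (∫ ω, f ω * (g ω - c) ∂P)
        = (∫ ω, f ω * g ω ∂P) - ∫ ω, f ω * c ∂P := by
      rw [← integral_sub ((hfgc.add (hf.mul_const c)).congr
          (Filter.Eventually.of_forall fun ω => by simp only [Pi.add_apply]; ring))
          (hf.mul_const c)]
      congr 1; funext ω; ring
    rw [this, integral_mul_const]
  have hξg_int : Integrable (fun ω => ξ ω * g ω) P := hg_int.bdd_mul hξ_meas hξb'
  have hsg_int : Integrable (fun ω => s ω * g ω) P := hg_int.bdd_mul hs_meas hsb'
  have key1 : (∫ ω, ξ ω * η ω ∂P) - (∫ ω, ξ ω ∂P) * c = ∫ ω, ξ ω * (g ω - c) ∂P := by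
    rw [pull ξ C hξm hξb]; exact cov_eq ξ hξ_int hξgc_int
  have key2 : (∫ ω, s ω * η ω ∂P) - (∫ ω, s ω ∂P) * c = ∫ ω, s ω * (g ω - c) ∂P := by
    rw [pull s 1 hsm (Filter.Eventually.of_forall hs_bd)]; exact cov_eq s hs_int hsgc_int
  -- |∫ ξ(g-c)| ≤ C ∫ |g-c| = C ∫ s(g-c)
  have habs : ∀ ω, s ω * (g ω - c) = |g ω - c| := by
    intro ω; rw [hs_val]
    rcases le_or_gt c (g ω) with h | h
    · rw [if_pos h, one_mul, abs_of_nonneg (by linarith)]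
    · rw [if_neg (not_le.mpr h), neg_one_mul, abs_of_neg (by linarith)]
  have step : |∫ ω, ξ ω * (g ω - c) ∂P| ≤ C * ∫ ω, s ω * (g ω - c) ∂P := by
    calc |∫ ω, ξ ω * (g ω - c) ∂P| ≤ ∫ ω, |ξ ω| * |g ω - c| ∂P := by
          simpa [Real.norm_eq_abs, abs_mul] using
            norm_integral_le_integral_norm (μ := P) (fun ω => ξ ω * (g ω - c))
      _ ≤ ∫ ω, C * |g ω - c| ∂P := by
          refine integral_mono_ae
            (hξgc_int.abs.congr (Filter.Eventually.of_forall fun ω => abs_mul _ _))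
            ((hgc_int.abs.const_mul C)) ?_
          filter_upwards [hξb] with ω hω
          exact mul_le_mul_of_nonneg_right hω (abs_nonneg _)
      _ = C * ∫ ω, |g ω - c| ∂P := integral_const_mul C _
      _ = C * ∫ ω, s ω * (g ω - c) ∂P := by
          congr 1; exact integral_congr_ae (Filter.Eventually.of_forall
            (fun ω => (habs ω).symm))
  have hrw : (fun ω => (2 * a.indicator (fun _ => (1:ℝ)) ω - 1) * η ω)
      = fun ω => s ω * η ω := rfl
  rw [hrw, key1]
  calc |∫ ω, ξ ω * (g ω - c) ∂P| ≤ C * ∫ ω, s ω * (g ω - c) ∂P := step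
    _ ≤ C * |∫ ω, s ω * (g ω - c) ∂P| := by
        exact mul_le_mul_of_nonneg_left (le_abs_self _) hC
    _ = C * |(∫ ω, s ω * η ω ∂P) - (∫ ω, s ω ∂P) * c| := by rw [key2]

lemma ind_int {s : Set Ω} (hs : MeasurableSet s) :
    Integrable (s.indicator fun _ => (1:ℝ)) P :=
  (integrable_const (1:ℝ)).indicator hs

lemma ind_integral {s : Set Ω} (hs : MeasurableSet s) :
    ∫ ω, s.indicator (fun _ => (1:ℝ)) ω ∂P = (P s).toReal := by
  rw [integral_indicator_const (1:ℝ) hs, smul_eq_mul, mul_one, measureReal_def]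

lemma sgn_integral {s : Set Ω} (hs : MeasurableSet s) :
    ∫ ω, (2 * s.indicator (fun _ => (1:ℝ)) ω - 1) ∂P = 2 * (P s).toReal - 1 := by
  have i1 : Integrable (fun ω => 2 * s.indicator (fun _ => (1:ℝ)) ω) P :=
    (ind_int P hs).const_mul 2
  rw [integral_sub i1 (integrable_const 1), integral_const_mul, ind_integral P hs,
    integral_const]
  simp

lemma sgn_mul_integral {s t : Set Ω} (hs : MeasurableSet s) (ht : MeasurableSet t) :
    ∫ ω, (2 * s.indicator (fun _ => (1:ℝ)) ω - 1) * (2 * t.indicator (fun _ => (1:ℝ)) ω - 1) ∂P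
      = 4 * (P (s ∩ t)).toReal - 2 * (P s).toReal - 2 * (P t).toReal + 1 := by
  have hptw : (fun ω => (2 * s.indicator (fun _ => (1:ℝ)) ω - 1)
        * (2 * t.indicator (fun _ => (1:ℝ)) ω - 1))
      = fun ω => 4 * (s ∩ t).indicator (fun _ => (1:ℝ)) ω
          - 2 * s.indicator (fun _ => (1:ℝ)) ω - 2 * t.indicator (fun _ => (1:ℝ)) ω + 1 := by
    funext ω
    by_cases h1 : ω ∈ s <;> by_cases h2 : ω ∈ t <;>
      simp [Set.indicator_apply, h1, h2, Set.mem_inter_iff] <;> ring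
  rw [hptw]
  have i1 : Integrable (fun ω => 4 * (s ∩ t).indicator (fun _ => (1:ℝ)) ω) P :=
    (ind_int P (hs.inter ht)).const_mul 4
  have i2 : Integrable (fun ω => 2 * s.indicator (fun _ => (1:ℝ)) ω) P :=
    (ind_int P hs).const_mul 2
  have i3 : Integrable (fun ω => 2 * t.indicator (fun _ => (1:ℝ)) ω) P :=
    (ind_int P ht).const_mul 2
  have i12 : Integrable (fun ω => 4 * (s ∩ t).indicator (fun _ => (1:ℝ)) ω
      - 2 * s.indicator (fun _ => (1:ℝ)) ω) P := i1.sub i2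
  have i123 : Integrable (fun ω => 4 * (s ∩ t).indicator (fun _ => (1:ℝ)) ω
      - 2 * s.indicator (fun _ => (1:ℝ)) ω - 2 * t.indicator (fun _ => (1:ℝ)) ω) P :=
    i12.sub i3
  rw [integral_add i123 (integrable_const 1),
    integral_sub i12 i3, integral_sub i1 i2,
    integral_const_mul, integral_const_mul, integral_const_mul,
    ind_integral P (hs.inter ht), ind_integral P hs, ind_integral P ht, integral_const]
  simp

theorem stmt16'
    (A B : MeasurableSpace Ω) (hA : A ≤ m0) (hB : B ≤ m0)
    (ξ η : Ω → ℝ) (C₁ C₂ : ℝ)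
    (hξm : Measurable[A] ξ) (hηm : Measurable[B] η)
    (hξb : ∀ᵐ ω ∂P, |ξ ω| ≤ C₁) (hηb : ∀ᵐ ω ∂P, |η ω| ≤ C₂) :
    |(∫ ω, ξ ω * η ω ∂P) - (∫ ω, ξ ω ∂P) * (∫ ω, η ω ∂P)|
      ≤ 4 * C₁ * C₂ * (sSup {x : ℝ | ∃ a b : Set Ω, MeasurableSet[A] a ∧ MeasurableSet[B] b ∧
        x = |(P (a ∩ b)).toReal - (P a).toReal * (P b).toReal|}) := by
  have hC₁ : 0 ≤ C₁ := by
    rcases hξb.exists with ⟨ω, hω⟩; exact (abs_nonneg _).trans hω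
  have hC₂ : 0 ≤ C₂ := by
    rcases hηb.exists with ⟨ω, hω⟩; exact (abs_nonneg _).trans hω
  have hη_int : Integrable η P :=
    (integrable_const C₂).mono' ((hηm.mono hB le_rfl).aestronglyMeasurable)
      (by simpa [Real.norm_eq_abs] using hηb)
  obtain ⟨a, ha, hred1⟩ := reduce (m0 := m0) P hA η hη_int
  set sa : Ω → ℝ := fun ω => 2 * a.indicator (fun _ => (1:ℝ)) ω - 1 with hsa
  have hsa_bd : ∀ ω, |sa ω| ≤ 1 := by
    intro ω
    by_cases h : ω ∈ a <;> simp [hsa, Set.indicator_apply, h] <;> norm_num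
  have hsam : Measurable[A] sa :=
    ((measurable_const.mul (measurable_const.indicator ha)).sub measurable_const)
  have hsa_int : Integrable sa P :=
    (integrable_const (1:ℝ)).mono' ((hsam.mono hA le_rfl).aestronglyMeasurable)
      (Filter.Eventually.of_forall (by simpa [Real.norm_eq_abs] using hsa_bd))
  have h1 := hred1 ξ C₁ hξm hξb
  obtain ⟨b, hb, hred2⟩ := reduce (m0 := m0) P hB sa hsa_int
  set sb : Ω → ℝ := fun ω => 2 * b.indicator (fun _ => (1:ℝ)) ω - 1 with hsb
  have h2 := hred2 η C₂ hηm hηb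
  -- symmetry: Cov(sa, η) = Cov(η, sa)
  have hsym : (∫ ω, sa ω * η ω ∂P) - (∫ ω, sa ω ∂P) * (∫ ω, η ω ∂P)
      = (∫ ω, η ω * sa ω ∂P) - (∫ ω, η ω ∂P) * (∫ ω, sa ω ∂P) := by
    rw [mul_comm (∫ ω, sa ω ∂P)]
    congr 1
    exact integral_congr_ae (Filter.Eventually.of_forall fun ω => mul_comm _ _)
  -- Cov(sb, sa) = 4 (P(b∩a) - P b P a)
  have hcov : (∫ ω, sb ω * sa ω ∂P) - (∫ ω, sb ω ∂P) * (∫ ω, sa ω ∂P)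
      = 4 * ((P (b ∩ a)).toReal - (P b).toReal * (P a).toReal) := by
    have hbm : MeasurableSet[m0] b := hB b hb
    have ham : MeasurableSet[m0] a := hA a ha
    show (∫ ω, (2 * b.indicator (fun _ => (1:ℝ)) ω - 1)
        * (2 * a.indicator (fun _ => (1:ℝ)) ω - 1) ∂P)
      - (∫ ω, (2 * b.indicator (fun _ => (1:ℝ)) ω - 1) ∂P)
        * (∫ ω, (2 * a.indicator (fun _ => (1:ℝ)) ω - 1) ∂P)
      = 4 * ((P (b ∩ a)).toReal - (P b).toReal * (P a).toReal)
    rw [sgn_mul_integral (m0 := m0) P hbm ham, sgn_integral (m0 := m0) P hbm, sgn_integral (m0 := m0) P ham]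
    ring
  -- the sup bound
  set S := {x : ℝ | ∃ a b : Set Ω, MeasurableSet[A] a ∧ MeasurableSet[B] b ∧
    x = |(P (a ∩ b)).toReal - (P a).toReal * (P b).toReal|} with hS
  have htoReal_le_one : ∀ s : Set Ω, (P s).toReal ≤ 1 := fun s => by
    have h : P s ≤ 1 := prob_le_one
    calc (P s).toReal ≤ (1 : ENNReal).toReal := ENNReal.toReal_mono ENNReal.one_ne_top h
      _ = 1 := by simp
  have hbdd : BddAbove S := by
    refine ⟨1, fun x hx => ?_⟩
    obtain ⟨u, v, _, _, rfl⟩ := hx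
    have h1 := htoReal_le_one (u ∩ v)
    have h2 := htoReal_le_one u
    have h3 := htoReal_le_one v
    have n1 : (0:ℝ) ≤ (P (u ∩ v)).toReal := ENNReal.toReal_nonneg
    have n2 : (0:ℝ) ≤ (P u).toReal := ENNReal.toReal_nonneg
    have n3 : (0:ℝ) ≤ (P v).toReal := ENNReal.toReal_nonneg
    rw [abs_le]; constructor <;> nlinarith
  have hmem : |(P (a ∩ b)).toReal - (P a).toReal * (P b).toReal| ∈ S :=
    ⟨a, b, ha, hb, rfl⟩
  have hle : |(P (b ∩ a)).toReal - (P b).toReal * (P a).toReal| ≤ sSup S := by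
    rw [Set.inter_comm, mul_comm]
    exact le_csSup hbdd hmem
  calc |(∫ ω, ξ ω * η ω ∂P) - (∫ ω, ξ ω ∂P) * (∫ ω, η ω ∂P)|
      ≤ C₁ * |(∫ ω, sa ω * η ω ∂P) - (∫ ω, sa ω ∂P) * (∫ ω, η ω ∂P)| := h1
    _ = C₁ * |(∫ ω, η ω * sa ω ∂P) - (∫ ω, η ω ∂P) * (∫ ω, sa ω ∂P)| := by rw [hsym]
    _ ≤ C₁ * (C₂ * |(∫ ω, sb ω * sa ω ∂P) - (∫ ω, sb ω ∂P) * (∫ ω, sa ω ∂P)|) :=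
        mul_le_mul_of_nonneg_left h2 hC₁
    _ = C₁ * (C₂ * (4 * |(P (b ∩ a)).toReal - (P b).toReal * (P a).toReal|)) := by
        rw [hcov, abs_mul]; norm_num
    _ ≤ C₁ * (C₂ * (4 * sSup S)) := by
        exact mul_le_mul_of_nonneg_left (mul_le_mul_of_nonneg_left
          (mul_le_mul_of_nonneg_left hle (by norm_num)) hC₂) hC₁
    _ = 4 * C₁ * C₂ * sSup S := by ring

end Helpers

/-- covariance inequality for bounded mixing variables: if `ξ`
is `𝒜`-measurable with `|ξ| ≤ C₁` a.s. and `η` is `ℬ`-measurable with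
`|η| ≤ C₂` a.s., then `|E[ξη] - E[ξ]E[η]| ≤ 4 C₁ C₂ α(𝒜,ℬ)`. -/
theorem stmt16
    {Ω : Type*} [m0 : MeasurableSpace Ω] (P : Measure Ω) [IsProbabilityMeasure P]
    (A B : MeasurableSpace Ω) (hA : A ≤ m0) (hB : B ≤ m0)
    (ξ η : Ω → ℝ) (C₁ C₂ : ℝ)
    (hξm : Measurable[A] ξ) (hηm : Measurable[B] η)
    (hξb : ∀ᵐ ω ∂P, |ξ ω| ≤ C₁) (hηb : ∀ᵐ ω ∂P, |η ω| ≤ C₂) :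
    |(∫ ω, ξ ω * η ω ∂P) - (∫ ω, ξ ω ∂P) * (∫ ω, η ω ∂P)|
      ≤ 4 * C₁ * C₂ * @alphaMix Ω m0 P A B := by
  have := stmt16' (m0 := m0) P A B hA hB ξ η C₁ C₂ hξm hηm hξb hηb
  simpa [alphaMix] using this
end
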